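/- arXiv:2505.06882 — 2 statements merged into one kernel-verified Lean document; each statement's English description precedes it below -/
import Mathlib

section
/- Suppose V(s) = e^{-sH_0} V e^{sH_0} satisfies ‖V(s)‖₂ ≤ a e^{bs} for all 0 ≤ s ≤ β. Then the Dyson series D(β) = Σ_{n≥1} ∫_0^β ds_1 ∫_0^{s_1} ds_2 ⋯ ∫_0^{s_{n-1}} ds_n V(s_n)⋯V(s_1) converges in Hilbert–Schmidt norm and satisfies ‖D(β)‖₂ ≤ exp[a (e^{βb} − 1)/b] − 1. -/
open MeasureTheory

local notation "⟪" x ", " y "⟫" => @inner ℂ _ _ x y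

/-- The Hilbert–Schmidt norm of an operator, computed in a given Hilbert basis:
`‖X‖₂ = (∑ i ‖X e_i‖²)^{1/2} = (Tr |X|²)^{1/2}`. -/
noncomputable def hsNorm {H : Type*} [NormedAddCommGroup H] [InnerProductSpace ℂ H]
    [CompleteSpace H] {ι : Type*} (e : HilbertBasis ι ℂ H) (X : H →L[ℂ] H) : ℝ :=
  Real.sqrt (∑' i : ι, ‖X (e i)‖ ^ 2)

/-- The `n`-th term of the Dyson series:
`∫_0^β ds_1 ∫_0^{s_1} ds_2 ⋯ ∫_0^{s_{n-1}} ds_n V(s_n)⋯V(s_1)`, written as an integral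
over the simplex `{0 ≤ s_n ≤ ⋯ ≤ s_1 ≤ β}` (here `s : Fin n → ℝ` is nondecreasing, and
the factor with the smallest time argument stands leftmost). -/
noncomputable def dysonTerm {H : Type*} [NormedAddCommGroup H] [InnerProductSpace ℂ H]
    [CompleteSpace H] (Vs : ℝ → (H →L[ℂ] H)) (β : ℝ) (n : ℕ) : H →L[ℂ] H :=
  ∫ s : Fin n → ℝ in
    {s | (∀ i, s i ∈ Set.Icc 0 β) ∧ (∀ i j : Fin n, i ≤ j → s i ≤ s j)},
    (List.ofFn fun i => Vs (s i)).prod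

/-!
Each term of the series is an integral over the ordered simplex `0 ≤ s₁ ≤ ⋯ ≤ sₙ ≤ β` of a
product of operators whose Hilbert–Schmidt norm is at most `∏ a e^{b sᵢ}`, because
`‖A X‖₂ ≤ ‖A‖ ‖X‖₂ ≤ ‖A‖₂ ‖X‖₂`. This bound is symmetric in the `sᵢ`, so its integral over the
simplex is `1/n!` times its integral over the cube `[0, β]ⁿ`, namely `Cⁿ / n!` with
`C = a (e^{bβ} - 1) / b`; summing over `n ≥ 1` gives `e^C - 1`.
-/

open scoped Nat

section HilbertSchmidt

variable {H : Type*} [NormedAddCommGroup H] [InnerProductSpace ℂ H]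
  {ι : Type*} (e : HilbertBasis ι ℂ H)

def IsHilbertSchmidt (X : H →L[ℂ] H) : Prop :=
  Summable fun i => ‖X (e i)‖ ^ 2

/-- Its norm is a partial sum of `hsNorm`; being continuous linear, it commutes with integrals
and series of operators, which is how bounds on `hsNorm` pass through them. -/
noncomputable def hsRestrict (F : Finset ι) : (H →L[ℂ] H) →L[ℂ] PiLp 2 (fun _ : F => H) :=
  (PiLp.continuousLinearEquiv 2 ℂ (fun _ : F => H)).symm.toContinuousLinearMap.comp
    (ContinuousLinearMap.pi fun i : F => ContinuousLinearMap.apply ℂ H (e i))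

lemma norm_hsRestrict (F : Finset ι) (X : H →L[ℂ] H) :
    ‖hsRestrict e F X‖ = √(∑ i ∈ F, ‖X (e i)‖ ^ 2) := by
  rw [← Finset.sum_coe_sort F, hsRestrict, PiLp.norm_eq_of_L2]
  rfl

variable [CompleteSpace H]

lemma hsNorm_nonneg (X : H →L[ℂ] H) : 0 ≤ hsNorm e X := Real.sqrt_nonneg _

variable {e}

lemma norm_hsRestrict_le_hsNorm {X : H →L[ℂ] H} (hX : IsHilbertSchmidt e X) (F : Finset ι) :
    ‖hsRestrict e F X‖ ≤ hsNorm e X := by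
  rw [norm_hsRestrict]
  exact Real.sqrt_le_sqrt (hX.sum_le_tsum F fun i _ => sq_nonneg _)

lemma isHilbertSchmidt_and_hsNorm_le_of_norm_hsRestrict_le {X : H →L[ℂ] H} {M : ℝ}
    (h : ∀ F, ‖hsRestrict e F X‖ ≤ M) : IsHilbertSchmidt e X ∧ hsNorm e X ≤ M := by
  have hM : 0 ≤ M := (norm_nonneg _).trans (h ∅)
  have hpartial : ∀ F, ∑ i ∈ F, ‖X (e i)‖ ^ 2 ≤ M ^ 2 := fun F =>
    (Real.sqrt_le_left hM).1 ((norm_hsRestrict e F X).symm.trans_le (h F))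
  have hX : IsHilbertSchmidt e X := summable_of_sum_le (fun i => sq_nonneg _) hpartial
  exact ⟨hX, (Real.sqrt_le_left hM).2 (hX.tsum_le_of_sum_le hpartial)⟩

/-- Expand `x` in the basis and apply Cauchy–Schwarz and Bessel's inequality to every partial
sum of `X x = ∑ ⟪e i, x⟫ X (e i)`. -/
lemma opNorm_le_hsNorm {X : H →L[ℂ] H} (hX : IsHilbertSchmidt e X) : ‖X‖ ≤ hsNorm e X := by
  refine X.opNorm_le_bound (hsNorm_nonneg e X) fun x => ?_
  have hXx : HasSum (fun i => ⟪e i, x⟫ • X (e i)) (X x) := by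
    simpa [HilbertBasis.repr_apply_apply] using (e.hasSum_repr x).mapL X
  refine le_of_tendsto' hXx.norm fun F => ?_
  calc ‖∑ i ∈ F, ⟪e i, x⟫ • X (e i)‖ ≤ ∑ i ∈ F, ‖⟪e i, x⟫‖ * ‖X (e i)‖ := by
        simpa only [norm_smul] using norm_sum_le F fun i => ⟪e i, x⟫ • X (e i)
    _ ≤ √(∑ i ∈ F, ‖⟪e i, x⟫‖ ^ 2) * √(∑ i ∈ F, ‖X (e i)‖ ^ 2) :=
        Real.sum_mul_le_sqrt_mul_sqrt F _ _
    _ ≤ ‖x‖ * hsNorm e X := by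
        rw [← norm_hsRestrict e F X]
        gcongr
        · exact Real.sqrt_le_left (norm_nonneg x) |>.2 (e.orthonormal.sum_inner_products_le x)
        · exact norm_hsRestrict_le_hsNorm hX F
    _ = hsNorm e X * ‖x‖ := mul_comm _ _

lemma isHilbertSchmidt_mul_and_hsNorm_mul_le (A : H →L[ℂ] H) {X : H →L[ℂ] H}
    (hX : IsHilbertSchmidt e X) :
    IsHilbertSchmidt e (A * X) ∧ hsNorm e (A * X) ≤ ‖A‖ * hsNorm e X := by
  have hpoint : ∀ i, ‖(A * X) (e i)‖ ^ 2 ≤ ‖A‖ ^ 2 * ‖X (e i)‖ ^ 2 := fun i => by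
    rw [← mul_pow]
    exact pow_le_pow_left₀ (norm_nonneg _) (A.le_opNorm _) 2
  have hAX : IsHilbertSchmidt e (A * X) :=
    (hX.mul_left _).of_nonneg_of_le (fun i => sq_nonneg _) hpoint
  refine ⟨hAX, ?_⟩
  calc hsNorm e (A * X) ≤ √(∑' i, ‖A‖ ^ 2 * ‖X (e i)‖ ^ 2) :=
        Real.sqrt_le_sqrt (hAX.tsum_le_tsum hpoint (hX.mul_left _))
    _ = ‖A‖ * hsNorm e X := by
        rw [tsum_mul_left, Real.sqrt_mul (sq_nonneg _), Real.sqrt_sq (norm_nonneg _), hsNorm]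

lemma isHilbertSchmidt_prod_and_hsNorm_prod_le {n : ℕ} (W : Fin (n + 1) → H →L[ℂ] H)
    (hW : ∀ i, IsHilbertSchmidt e (W i)) :
    IsHilbertSchmidt e (List.ofFn W).prod ∧ hsNorm e (List.ofFn W).prod ≤ ∏ i, hsNorm e (W i) := by
  induction n with
  | zero => simpa using hW 0
  | succ n ih =>
    obtain ⟨htail, htail_le⟩ := ih (fun i => W i.succ) fun i => hW i.succ
    obtain ⟨hprod, hprod_le⟩ := isHilbertSchmidt_mul_and_hsNorm_mul_le (W 0) htail
    rw [List.ofFn_succ, List.prod_cons, Fin.prod_univ_succ]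
    exact ⟨hprod, hprod_le.trans <|
      mul_le_mul (opNorm_le_hsNorm (hW 0)) htail_le (hsNorm_nonneg e _) (hsNorm_nonneg e _)⟩

lemma isHilbertSchmidt_integral_and_hsNorm_integral_le {α : Type*} [MeasurableSpace α]
    {μ : Measure α} {f : α → H →L[ℂ] H} {g : α → ℝ} (hf : Integrable f μ) (hg : Integrable g μ)
    (hfg : ∀ᵐ x ∂μ, IsHilbertSchmidt e (f x) ∧ hsNorm e (f x) ≤ g x) :
    IsHilbertSchmidt e (∫ x, f x ∂μ) ∧ hsNorm e (∫ x, f x ∂μ) ≤ ∫ x, g x ∂μ := by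
  refine isHilbertSchmidt_and_hsNorm_le_of_norm_hsRestrict_le fun F => ?_
  rw [← (hsRestrict e F).integral_comp_comm hf]
  exact norm_integral_le_of_norm_le hg <|
    hfg.mono fun x hx => (norm_hsRestrict_le_hsNorm hx.1 F).trans hx.2

lemma summable_and_hsNorm_tsum_le {κ : Type*} {f : κ → H →L[ℂ] H}
    (hf : ∀ n, IsHilbertSchmidt e (f n)) (hsum : Summable fun n => hsNorm e (f n)) :
    Summable f ∧ IsHilbertSchmidt e (∑' n, f n) ∧ hsNorm e (∑' n, f n) ≤ ∑' n, hsNorm e (f n) := by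
  have hconv : Summable f := hsum.of_norm_bounded fun n => opNorm_le_hsNorm (hf n)
  refine ⟨hconv, isHilbertSchmidt_and_hsNorm_le_of_norm_hsRestrict_le fun F => ?_⟩
  have hbound : ∀ n, ‖hsRestrict e F (f n)‖ ≤ hsNorm e (f n) := fun n =>
    norm_hsRestrict_le_hsNorm (hf n) F
  have hnorm : Summable fun n => ‖hsRestrict e F (f n)‖ :=
    hsum.of_nonneg_of_le (fun n => norm_nonneg _) hbound
  rw [(hsRestrict e F).map_tsum hconv]
  exact (norm_tsum_le_tsum_norm hnorm).trans (hnorm.tsum_le_tsum hbound hsum)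

end HilbertSchmidt

section OrderedSimplex

def orderedSimplex (I : Set ℝ) (n : ℕ) : Set (Fin n → ℝ) :=
  {s | (∀ i, s i ∈ I) ∧ ∀ i j : Fin n, i ≤ j → s i ≤ s j}

lemma orderedSimplex_eq (I : Set ℝ) (n : ℕ) :
    orderedSimplex I n = Set.univ.pi (fun _ => I) ∩ {s | Monotone s} := by
  ext s
  simp [orderedSimplex, Monotone]

lemma isClosed_setOf_monotone {α β : Type*} [Preorder α] [TopologicalSpace β] [Preorder β]
    [OrderClosedTopology β] : IsClosed {s : α → β | Monotone s} := by
  simp only [Monotone, Set.ofPred_forall]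
  exact isClosed_iInter fun i => isClosed_iInter fun j => isClosed_iInter fun _ =>
    isClosed_le (continuous_apply i) (continuous_apply j)

lemma isCompact_orderedSimplex {I : Set ℝ} (hI : IsCompact I) (n : ℕ) :
    IsCompact (orderedSimplex I n) := by
  rw [orderedSimplex_eq]
  exact (isCompact_univ_pi fun _ => hI).inter_right isClosed_setOf_monotone

lemma measurableSet_orderedSimplex {I : Set ℝ} (hI : MeasurableSet I) (n : ℕ) :
    MeasurableSet (orderedSimplex I n) := by
  rw [orderedSimplex_eq]
  exact (MeasurableSet.univ_pi fun _ => hI).inter isClosed_setOf_monotone.measurableSet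

lemma measurableSet_setOf_monotone_comp {n : ℕ} (σ : Equiv.Perm (Fin n)) :
    MeasurableSet {s : Fin n → ℝ | Monotone (s ∘ σ)} := by
  have hcomp : Continuous fun s : Fin n → ℝ => s ∘ σ :=
    continuous_pi fun i => continuous_apply (σ i)
  exact (isClosed_setOf_monotone.preimage hcomp).measurableSet

/-- A tuple with a repeated entry lies on one of the hyperplanes `s i = s j`. -/
lemma volume_setOf_not_injective {ι : Type*} [Fintype ι] :
    volume {s : ι → ℝ | ¬ Function.Injective s} = 0 := by
  classical
  have hsub : {s : ι → ℝ | ¬ Function.Injective s} ⊆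
      ⋃ (p : ι × ι) (_ : p.1 ≠ p.2), {s : ι → ℝ | s p.1 = s p.2} := by
    intro s hs
    simp only [Function.Injective, not_forall] at hs
    obtain ⟨i, j, hij, hne⟩ := hs
    exact Set.mem_biUnion (x := (i, j)) hne hij
  refine measure_mono_null hsub (measure_iUnion_null fun p => measure_iUnion_null fun hne => ?_)
  let L : (ι → ℝ) →ₗ[ℝ] ℝ := (LinearMap.proj p.1 : (ι → ℝ) →ₗ[ℝ] ℝ) - LinearMap.proj p.2
  have hker : {s : ι → ℝ | s p.1 = s p.2} = LinearMap.ker L := by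
    ext s
    simp [L, sub_eq_zero]
  rw [hker]
  refine Measure.addHaar_submodule _ _ fun htop => ?_
  have hsingle : Pi.single p.1 (1 : ℝ) ∈ LinearMap.ker L := htop ▸ Submodule.mem_top
  simp [L, Ne.symm hne] at hsingle

variable {E : Type*} [NormedAddCommGroup E] [NormedSpace ℝ E]

/-- Off the null set of tuples with a repeated entry, `s` lies in exactly one of the chambers
`{s | Monotone (s ∘ σ)}`, namely the one of `σ = Tuple.sort s`. -/
lemma integral_eq_sum_integral_setOf_monotone_comp {n : ℕ} {F : (Fin n → ℝ) → E}
    (hF : Integrable F) :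
    ∫ s, F s = ∑ σ : Equiv.Perm (Fin n), ∫ s in {s | Monotone (s ∘ σ)}, F s := by
  have hcover : F =ᵐ[volume]
      fun s => ∑ σ : Equiv.Perm (Fin n), {s | Monotone (s ∘ σ)}.indicator F s := by
    filter_upwards [ae_iff.2 volume_setOf_not_injective] with s hs
    rw [Finset.sum_eq_single_of_mem (Tuple.sort s) (Finset.mem_univ _)]
    · exact (Set.indicator_of_mem (Tuple.monotone_sort s) F).symm
    · intro τ _ hτ
      refine Set.indicator_of_notMem (fun hmono => hτ ?_) F
      exact Equiv.ext fun i => hs (congrFun (Tuple.unique_monotone hmono (Tuple.monotone_sort s)) i)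
  rw [integral_congr_ae hcover,
    integral_finsetSum _ fun σ _ => hF.indicator (measurableSet_setOf_monotone_comp σ)]
  exact Finset.sum_congr rfl fun σ _ => integral_indicator (measurableSet_setOf_monotone_comp σ)

lemma setIntegral_setOf_monotone_comp {n : ℕ} {F : (Fin n → ℝ) → E}
    (hF : ∀ s (σ : Equiv.Perm (Fin n)), F (s ∘ σ) = F s) (σ : Equiv.Perm (Fin n)) :
    ∫ s in {s | Monotone (s ∘ σ)}, F s = ∫ s in {s | Monotone s}, F s := by
  let T := MeasurableEquiv.piCongrLeft (fun _ : Fin n => ℝ) σ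
  have hT : ∀ x, T x ∘ σ = x := fun x => funext fun i =>
    Equiv.piCongrLeft_apply_apply (fun _ => ℝ) σ x i
  have hpre : T ⁻¹' {s | Monotone (s ∘ σ)} = {s | Monotone s} := by
    ext x
    simp only [Set.mem_preimage, Set.mem_ofPred_eq, hT]
  rw [← (volume_measurePreserving_piCongrLeft (fun _ : Fin n => ℝ) σ).setIntegral_preimage_emb
    T.measurableEmbedding, hpre]
  refine setIntegral_congr_fun isClosed_setOf_monotone.measurableSet fun x _ => ?_
  rw [← hF (T x) σ, hT]

theorem integral_orderedSimplex_prod {I : Set ℝ} (hI : MeasurableSet I) {f : ℝ → ℝ}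
    (hf : IntegrableOn f I) (n : ℕ) :
    ∫ s in orderedSimplex I n, ∏ i, f (s i) = (∫ t in I, f t) ^ n / n ! := by
  let F : (Fin n → ℝ) → ℝ := fun s => ∏ i, I.indicator f (s i)
  have hF : Integrable F := Integrable.fintype_prod fun _ => hf.integrable_indicator hI
  have hsym : ∀ s (σ : Equiv.Perm (Fin n)), F (s ∘ σ) = F s := fun s σ =>
    Equiv.prod_comp σ fun i => I.indicator f (s i)
  have hrestrict : ∫ s in {s | Monotone s}, F s = ∫ s in orderedSimplex I n, ∏ i, f (s i) := by
    have hvanish : ∀ s ∈ {s | Monotone s} \ orderedSimplex I n, F s = 0 := by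
      rintro s ⟨hmono, hnot⟩
      obtain ⟨i, hi⟩ : ∃ i, s i ∉ I := by
        by_contra! h
        exact hnot ⟨h, hmono⟩
      exact Finset.prod_eq_zero (Finset.mem_univ i) (Set.indicator_of_notMem hi f)
    rw [setIntegral_eq_of_subset_of_forall_sdiff_eq_zero isClosed_setOf_monotone.measurableSet
      (fun s hs => hs.2) hvanish]
    refine setIntegral_congr_fun (measurableSet_orderedSimplex hI n) fun s hs => ?_
    exact Finset.prod_congr rfl fun i _ => Set.indicator_of_mem (hs.1 i) f
  have htotal : ∫ s, F s = (∫ t in I, f t) ^ n := by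
    rw [volume_pi, integral_fintype_prod_eq_pow, integral_indicator hI, Fintype.card_fin]
  have hchambers : ∫ s, F s = n ! * ∫ s in {s | Monotone s}, F s := by
    rw [integral_eq_sum_integral_setOf_monotone_comp hF,
      Finset.sum_congr rfl fun σ _ => setIntegral_setOf_monotone_comp hsym σ, Finset.sum_const,
      Finset.card_univ, Fintype.card_perm, Fintype.card_fin, nsmul_eq_mul]
  rw [← hrestrict, eq_div_iff (by positivity), mul_comm, ← hchambers, htotal]

end OrderedSimplex

lemma Real.hasSum_pow_succ_div_factorial (x : ℝ) :
    HasSum (fun n : ℕ => x ^ (n + 1) / (n + 1)!) (Real.exp x - 1) := by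
  have hexp := NormedSpace.expSeries_div_hasSum_exp x
  rw [← Real.exp_eq_exp_ℝ] at hexp
  simpa using (hasSum_nat_add_iff' 1).2 hexp

lemma integral_Icc_const_mul_exp_mul (a : ℝ) {b : ℝ} (hb : b ≠ 0) {β : ℝ} (hβ : 0 ≤ β) :
    ∫ t in Set.Icc 0 β, a * Real.exp (b * t) = a * (Real.exp (b * β) - 1) / b := by
  rw [integral_Icc_eq_integral_Ioc, ← intervalIntegral.integral_of_le hβ,
    intervalIntegral.integral_const_mul, intervalIntegral.integral_comp_mul_left Real.exp hb,
    mul_zero, integral_exp, Real.exp_zero, smul_eq_mul]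
  field_simp

section Dyson

variable {H : Type*} [NormedAddCommGroup H] [InnerProductSpace ℂ H] [CompleteSpace H]
  {ι : Type*} {e : HilbertBasis ι ℂ H}

theorem isHilbertSchmidt_dysonTerm_succ_and_hsNorm_le {Vs : ℝ → H →L[ℂ] H} (hVs : Continuous Vs)
    {g : ℝ → ℝ} (hg : Continuous g) {β : ℝ}
    (hHS : ∀ s ∈ Set.Icc 0 β, IsHilbertSchmidt e (Vs s))
    (hbound : ∀ s ∈ Set.Icc 0 β, hsNorm e (Vs s) ≤ g s) (n : ℕ) :
    IsHilbertSchmidt e (dysonTerm Vs β (n + 1)) ∧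
      hsNorm e (dysonTerm Vs β (n + 1)) ≤ (∫ t in Set.Icc 0 β, g t) ^ (n + 1) / (n + 1)! := by
  have hcompact := isCompact_orderedSimplex (isCompact_Icc (a := 0) (b := β)) (n + 1)
  have hVprod : Continuous fun s : Fin (n + 1) → ℝ => (List.ofFn fun i => Vs (s i)).prod := by
    simp_rw [List.ofFn_eq_map]
    exact continuous_list_prod _ fun i _ => hVs.comp (continuous_apply i)
  have hgprod : Continuous fun s : Fin (n + 1) → ℝ => ∏ i, g (s i) :=
    continuous_finsetProd _ fun i _ => hg.comp (continuous_apply i)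
  rw [← integral_orderedSimplex_prod measurableSet_Icc hg.integrableOn_Icc]
  refine isHilbertSchmidt_integral_and_hsNorm_integral_le
    (hVprod.continuousOn.integrableOn_compact hcompact)
    (hgprod.continuousOn.integrableOn_compact hcompact)
    (ae_restrict_of_forall_mem (measurableSet_orderedSimplex measurableSet_Icc _) fun s hs => ?_)
  obtain ⟨hprod, hprod_le⟩ :=
    isHilbertSchmidt_prod_and_hsNorm_prod_le _ fun i => hHS _ (hs.1 i)
  exact ⟨hprod, hprod_le.trans <|
    Finset.prod_le_prod (fun i _ => hsNorm_nonneg e _) fun i _ => hbound _ (hs.1 i)⟩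

end Dyson

theorem dyson_series_hs_bound_general
    {H : Type*} [NormedAddCommGroup H] [InnerProductSpace ℂ H] [CompleteSpace H]
    {ι : Type*} (e : HilbertBasis ι ℂ H)
    (Vs : ℝ → (H →L[ℂ] H)) (hVs_cont : Continuous Vs)
    (a b β : ℝ) (hb : 0 < b) (hβ : 0 < β)
    (hHS : ∀ s ∈ Set.Icc (0 : ℝ) β, Summable fun i : ι => ‖Vs s (e i)‖ ^ 2)
    (hbound : ∀ s ∈ Set.Icc (0 : ℝ) β, hsNorm e (Vs s) ≤ a * Real.exp (b * s)) :
    Summable (fun n : ℕ => hsNorm e (dysonTerm Vs β (n + 1))) ∧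
    Summable (fun n : ℕ => dysonTerm Vs β (n + 1)) ∧
    hsNorm e (∑' n : ℕ, dysonTerm Vs β (n + 1)) ≤
      Real.exp (a * (Real.exp (β * b) - 1) / b) - 1 := by
  have hterm := isHilbertSchmidt_dysonTerm_succ_and_hsNorm_le hVs_cont (by fun_prop) hHS hbound
  simp only [integral_Icc_const_mul_exp_mul a hb.ne' hβ.le] at hterm
  have hseries := Real.hasSum_pow_succ_div_factorial (a * (Real.exp (b * β) - 1) / b)
  have hsum : Summable fun n => hsNorm e (dysonTerm Vs β (n + 1)) :=
    hseries.summable.of_nonneg_of_le (fun n => hsNorm_nonneg e _) fun n => (hterm n).2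
  obtain ⟨hconv, -, hle⟩ := summable_and_hsNorm_tsum_le (fun n => (hterm n).1) hsum
  refine ⟨hsum, hconv, hle.trans ?_⟩
  rw [mul_comm β b, ← hseries.tsum_eq]
  exact hsum.tsum_le_tsum (fun n => (hterm n).2) hseries.summable

/-- Suppose `V(s) = e^{-sH₀} V e^{sH₀}` satisfies `‖V(s)‖₂ ≤ a e^{bs}`
for all `0 ≤ s ≤ β`. Then the Dyson series
`D(β) = ∑_{n≥1} ∫_0^β ds_1 ∫_0^{s_1} ds_2 ⋯ ∫_0^{s_{n-1}} ds_n V(s_n)⋯V(s_1)`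
converges in Hilbert–Schmidt norm and satisfies
`‖D(β)‖₂ ≤ exp[a (e^{βb} − 1)/b] − 1`. -/
theorem dyson_series_hs_bound
    {H : Type*} [NormedAddCommGroup H] [InnerProductSpace ℂ H] [CompleteSpace H]
    {ι : Type*} (e : HilbertBasis ι ℂ H)
    (Vs : ℝ → (H →L[ℂ] H)) (hVs_cont : Continuous Vs)
    (a b β : ℝ) (ha : 0 ≤ a) (hb : 0 < b) (hβ : 0 < β)
    (hHS : ∀ s ∈ Set.Icc (0 : ℝ) β, Summable fun i : ι => ‖Vs s (e i)‖ ^ 2)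
    (hbound : ∀ s ∈ Set.Icc (0 : ℝ) β, hsNorm e (Vs s) ≤ a * Real.exp (b * s)) :
    Summable (fun n : ℕ => hsNorm e (dysonTerm Vs β (n + 1))) ∧
    Summable (fun n : ℕ => dysonTerm Vs β (n + 1)) ∧
    hsNorm e (∑' n : ℕ, dysonTerm Vs β (n + 1)) ≤
      Real.exp (a * (Real.exp (β * b) - 1) / b) - 1 :=
  dyson_series_hs_bound_general e Vs hVs_cont a b β hb hβ hHS hbound
end

section
/- For the truncated oscillator-bath interaction V = χ_{H_0≤Ω} (Σ_{j=1}^N g_j a† b_j + h.c.) χ_{H_0≤Ω}, with H_0 = ω_0 a†a + Σ_j ω_j b_j† b_j, the bound ‖e^{-sH_0} V e^{sH_0}‖₂ ≤ 2 ‖g‖₂ √N (Ω/ω_min + 1)^{(N+3)/2} e^{|s| Δω} holds for all real s, where ω_min = min_{0≤j≤N} ω_j, Δω = max_{1≤j≤N} |ω_0 − ω_j|, and ‖g‖₂ = (Σ_j |g_j|²)^{1/2}. -/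
/-! In the occupation-number basis, `V` sends `|m⟩` to a combination of the `2N` states
obtained by moving one quantum between `a` and some `b_j`, with amplitudes
`g_j √((m_0 + 1) m_j)` and `ḡ_j √(m_0 (m_j + 1))`, both at most `‖g_j‖ (Ω/ω_min + 1)` once
`E(m) ≤ Ω` (each occupation number is then at most `Ω/ω_min`). Such a move changes the energy
by `±(ω_0 - ω_j)`, so conjugation by `e^{-sH₀}` costs at most a factor `e^{|s| Δω}`. Hence
every column of `W` has norm at most `2 e^{|s| Δω} (Ω/ω_min + 1) ∑ ‖g_j‖`, which Cauchy–Schwarz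
bounds by `2 e^{|s| Δω} (Ω/ω_min + 1) √N ‖g‖₂`, and only the at most `(Ω/ω_min + 1)^{N+1}`
columns with `E(m) ≤ Ω` are nonzero. -/

open scoped Classical

local notation "⟪" x ", " y "⟫" => @inner ℂ _ _ x y

open Finset

namespace HilbertBasis

variable {𝕜 ι E : Type*} [RCLike 𝕜] [NormedAddCommGroup E] [InnerProductSpace 𝕜 E]
  (b : HilbertBasis ι 𝕜 E)

theorem eq_zero_of_forall_inner_eq_zero {x : E} (hx : ∀ i, inner 𝕜 (b i) x = 0) : x = 0 := by
  apply b.repr.injective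
  ext i
  simp [b.repr_apply_apply, hx]

theorem eq_sum_smul_of_inner_eq [DecidableEq ι] {κ : Type*} (s : Finset κ) (u : κ → ι)
    (φ : ι → 𝕜) (c : κ → 𝕜) {x : E}
    (hx : ∀ i, inner 𝕜 (b i) x = φ i * ∑ k ∈ s, c k * if i = u k then 1 else 0) :
    x = ∑ k ∈ s, (φ (u k) * c k) • b (u k) := by
  refine sub_eq_zero.1 (b.eq_zero_of_forall_inner_eq_zero fun i => ?_)
  simp only [inner_sub_right, inner_sum, inner_smul_right, orthonormal_iff_ite.1 b.orthonormal,
    hx, mul_sum, sub_eq_zero]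
  refine sum_congr rfl fun k _ => ?_
  split_ifs with h
  · rw [h]; ring
  · simp

theorem norm_le_sum_of_inner_eq [DecidableEq ι] {κ : Type*} (s : Finset κ) (u : κ → ι)
    (φ : ι → 𝕜) (c : κ → 𝕜) {x : E}
    (hx : ∀ i, inner 𝕜 (b i) x = φ i * ∑ k ∈ s, c k * if i = u k then 1 else 0) :
    ‖x‖ ≤ ∑ k ∈ s, ‖φ (u k) * c k‖ := by
  rw [b.eq_sum_smul_of_inner_eq s u φ c hx]
  refine (norm_sum_le _ _).trans_eq (sum_congr rfl fun k _ => ?_)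
  rw [norm_smul, b.orthonormal.1, mul_one]

end HilbertBasis

theorem hsNorm_le_sqrt_card_mul {H ι : Type*} [NormedAddCommGroup H]
    [InnerProductSpace ℂ H] [CompleteSpace H] (e : HilbertBasis ι ℂ H) (X : H →L[ℂ] H)
    (F : Finset ι) (hF : ∀ i ∉ F, X (e i) = 0) {C : ℝ} (hC₀ : 0 ≤ C)
    (hC : ∀ i, ‖X (e i)‖ ≤ C) : hsNorm e X ≤ √(#F : ℝ) * C := by
  rw [hsNorm, tsum_eq_sum fun i hi => by simp [hF i hi], ← Real.sqrt_sq hC₀,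
    ← Real.sqrt_mul (by positivity)]
  gcongr
  calc ∑ i ∈ F, ‖X (e i)‖ ^ 2 ≤ ∑ _i ∈ F, C ^ 2 := by gcongr with i; exact hC i
    _ = #F * C ^ 2 := by rw [sum_const, nsmul_eq_mul]

theorem sum_le_sqrt_card_mul_sqrt_sum_sq {ι : Type*} (s : Finset ι) (f : ι → ℝ) :
    ∑ i ∈ s, f i ≤ √(#s : ℝ) * √(∑ i ∈ s, f i ^ 2) := by
  rw [← Real.sqrt_mul (Nat.cast_nonneg _)]
  exact (le_abs_self _).trans (Real.abs_le_sqrt sq_sum_le_card_mul_sum_sq)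

namespace OscillatorBath

variable {ι : Type*} [Fintype ι]

def energy (ω : ι → ℝ) (m : ι → ℕ) : ℝ := ∑ j, ω j * m j

def hop [DecidableEq ι] (i k : ι) (m : ι → ℕ) : ι → ℕ :=
  Function.update (Function.update m i (m i + 1)) k (m k - 1)

theorem energy_update [DecidableEq ι] (ω : ι → ℝ) (m : ι → ℕ) (i : ι) (a : ℕ) :
    energy ω (Function.update m i a) = energy ω m + ω i * (a - m i) := by
  rw [energy, energy, ← sub_eq_iff_eq_add', ← sum_sub_distrib,
    sum_eq_single i (fun j _ hj => by simp [hj]) (by simp)]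
  simp [mul_sub]

theorem energy_hop [DecidableEq ι] (ω : ι → ℝ) {m : ι → ℕ} {i k : ι} (hik : i ≠ k)
    (hk : m k ≠ 0) :
    energy ω (hop i k m) = energy ω m + (ω i - ω k) := by
  rw [hop, energy_update, energy_update, Function.update_of_ne hik.symm,
    Nat.cast_sub (Nat.one_le_iff_ne_zero.2 hk)]
  push_cast
  ring

theorem natCast_le_div_iInf_of_energy_le {ω : ι → ℝ} (hω : ∀ j, 0 < ω j) {m : ι → ℕ} {Ω : ℝ}
    (hm : energy ω m ≤ Ω) (j : ι) : (m j : ℝ) ≤ Ω / ⨅ i, ω i := by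
  have : Nonempty ι := ⟨j⟩
  have hωmin : 0 < ⨅ i, ω i := by
    obtain ⟨i₀, hi₀⟩ := Finite.exists_min ω
    exact (hω i₀).trans_le (le_ciInf hi₀)
  have hj : ω j * m j ≤ Ω := (single_le_sum (f := fun i => ω i * (m i : ℝ))
    (fun i _ => mul_nonneg (hω i).le (Nat.cast_nonneg _)) (mem_univ j)).trans hm
  rw [le_div_iff₀ hωmin]
  calc (m j : ℝ) * ⨅ i, ω i ≤ m j * ω j := by
        gcongr; exact ciInf_le (Finite.bddBelow_range ω) j
    _ ≤ Ω := by linarith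

theorem exp_mul_sqrt_hop_le [DecidableEq ι] {ω : ι → ℝ} (hω : ∀ j, 0 < ω j) {m : ι → ℕ}
    {Ω Δ : ℝ} (hm : energy ω m ≤ Ω) {i k : ι} (hik : i ≠ k) (hΔ : |ω i - ω k| ≤ Δ) (s : ℝ) :
    Real.exp (-s * (energy ω (hop i k m) - energy ω m)) * √((m i + 1) * m k) ≤
      Real.exp (|s| * Δ) * (Ω / (⨅ j, ω j) + 1) := by
  have hmi := natCast_le_div_iInf_of_energy_le hω hm i
  have hmk := natCast_le_div_iInf_of_energy_le hω hm k
  have hK : 0 ≤ Ω / (⨅ j, ω j) + 1 := by linarith [(Nat.cast_nonneg (m k) : (0:ℝ) ≤ _)]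
  rcases eq_or_ne (m k) 0 with hk | hk
  · simp only [hk, Nat.cast_zero, mul_zero, Real.sqrt_zero]
    positivity
  refine mul_le_mul ?_ ?_ (Real.sqrt_nonneg _) (Real.exp_pos _).le
  · rw [Real.exp_le_exp, energy_hop ω hik hk, add_sub_cancel_left]
    calc -s * (ω i - ω k) ≤ |s| * |ω i - ω k| := by
          rw [← abs_mul, neg_mul]; exact neg_le_abs _
      _ ≤ |s| * Δ := by gcongr
  · rw [Real.sqrt_le_left hK, sq]
    gcongr; linarith

theorem mem_piFinset_range_of_energy_le [DecidableEq ι] {ω : ι → ℝ} (hω : ∀ j, 0 < ω j)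
    {m : ι → ℕ} {Ω : ℝ} (hm : energy ω m ≤ Ω) :
    m ∈ Fintype.piFinset fun _ => range (⌊Ω / ⨅ i, ω i⌋₊ + 1) :=
  Fintype.mem_piFinset.2 fun j =>
    mem_range.2 (Nat.lt_succ_of_le (Nat.le_floor (natCast_le_div_iInf_of_energy_le hω hm j)))

theorem card_piFinset_range_floor_le [DecidableEq ι] {K : ℝ} (hK : 0 ≤ K) :
    (#(Fintype.piFinset fun _ : ι => range (⌊K⌋₊ + 1)) : ℝ) ≤ (K + 1) ^ Fintype.card ι := by
  rw [Fintype.card_piFinset, prod_const, card_range, card_univ]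
  push_cast
  gcongr
  exact Nat.floor_le hK

theorem norm_le_of_inner_eq_truncated_interaction {H : Type*} [NormedAddCommGroup H]
    [InnerProductSpace ℂ H] [CompleteSpace H] {N : ℕ} (e : HilbertBasis (Fin (N + 1) → ℕ) ℂ H)
    {ω : Fin (N + 1) → ℝ} (hω : ∀ j, 0 < ω j) (g : Fin N → ℂ) {Ω Δ : ℝ} (hΩ : 0 ≤ Ω)
    (hΔ : ∀ j : Fin N, |ω 0 - ω j.succ| ≤ Δ) (s : ℝ) (m : Fin (N + 1) → ℕ) {x : H}
    (hx : ∀ n, ⟪e n, x⟫ = (Real.exp (-s * (energy ω n - energy ω m)) : ℂ) *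
      if energy ω n ≤ Ω ∧ energy ω m ≤ Ω then
        ∑ j : Fin N,
          ((g j) * (√(((m 0 : ℝ) + 1) * (m j.succ : ℝ)) : ℂ) *
              (if n = hop 0 j.succ m then 1 else 0) +
            (starRingEnd ℂ (g j)) * (√((m 0 : ℝ) * ((m j.succ : ℝ) + 1)) : ℂ) *
              (if n = hop j.succ 0 m then 1 else 0))
      else 0) :
    ‖x‖ ≤ 2 * Real.exp (|s| * Δ) * (Ω / (⨅ j, ω j) + 1) * ∑ j, ‖g j‖ := by
  set B := Real.exp (|s| * Δ) * (Ω / (⨅ j, ω j) + 1)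
  let φ : (Fin (N + 1) → ℕ) → ℂ := fun n =>
    (Real.exp (-s * (energy ω n - energy ω m)) : ℂ) *
      if energy ω n ≤ Ω ∧ energy ω m ≤ Ω then 1 else 0
  have hφ : ∀ {i k : Fin (N + 1)}, i ≠ k → |ω i - ω k| ≤ Δ → ∀ z : ℂ,
      ‖φ (hop i k m) * (z * (√((m i + 1) * m k) : ℝ))‖ ≤ B * ‖z‖ := by
    intro i k hik hΔik z
    simp only [φ]
    by_cases hcond : energy ω (hop i k m) ≤ Ω ∧ energy ω m ≤ Ω
    · have key := exp_mul_sqrt_hop_le hω hcond.2 hik hΔik s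
      rw [if_pos hcond, mul_one, norm_mul, norm_mul, Complex.norm_real, Complex.norm_real,
        Real.norm_of_nonneg (Real.exp_pos _).le, Real.norm_of_nonneg (Real.sqrt_nonneg _)]
      calc _ = Real.exp (-s * (energy ω (hop i k m) - energy ω m)) * √((m i + 1) * m k) * ‖z‖ :=
            by ring
        _ ≤ B * ‖z‖ := by gcongr
    · have : 0 ≤ Ω / ⨅ j, ω j := div_nonneg hΩ (le_ciInf fun j => (hω j).le)
      rw [if_neg hcond, mul_zero, zero_mul, norm_zero]
      positivity
  let u : Fin N ⊕ Fin N → (Fin (N + 1) → ℕ) :=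
    Sum.elim (fun j => hop 0 j.succ m) (fun j => hop j.succ 0 m)
  let c : Fin N ⊕ Fin N → ℂ := Sum.elim (fun j => g j * (√((m 0 + 1) * m j.succ) : ℝ))
    (fun j => starRingEnd ℂ (g j) * (√((m j.succ + 1) * m 0) : ℝ))
  have hxφ : ∀ n, ⟪e n, x⟫ = φ n * ∑ k, c k * if n = u k then 1 else 0 := by
    intro n
    rw [hx n, Fintype.sum_sum_type, ← sum_add_distrib]
    simp only [φ, c, u, Sum.elim_inl, Sum.elim_inr, mul_comm ((m 0 : ℝ))]
    split_ifs
    · rw [mul_one]; rfl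
    · rw [mul_zero, zero_mul]
  calc ‖x‖ ≤ ∑ k, ‖φ (u k) * c k‖ := e.norm_le_sum_of_inner_eq univ u φ c hxφ
    _ = ∑ j, ‖φ (hop 0 j.succ m) * c (.inl j)‖ + ∑ j, ‖φ (hop j.succ 0 m) * c (.inr j)‖ :=
      Fintype.sum_sum_type _
    _ ≤ ∑ j, B * ‖g j‖ + ∑ j, B * ‖starRingEnd ℂ (g j)‖ := by
      refine add_le_add (sum_le_sum fun j _ => ?_) (sum_le_sum fun j _ => ?_)
      · exact hφ (Fin.succ_ne_zero j).symm (hΔ j) _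
      · exact hφ (Fin.succ_ne_zero j) (abs_sub_comm (ω 0) _ ▸ hΔ j) _
    _ = 2 * Real.exp (|s| * Δ) * (Ω / (⨅ j, ω j) + 1) * ∑ j, ‖g j‖ := by
      simp only [B, RCLike.norm_conj, ← mul_sum]; ring

end OscillatorBath

open OscillatorBath

/-- The Fock space of the `N+1` oscillators is realized as a Hilbert space `H` with
orthonormal basis `(|m⟩)` indexed by occupation numbers `m : Fin (N+1) → ℕ`
(oscillator `a` has index `0` and bath oscillator `b_j` has index `j`); the operators
`V` and `W(s) = e^{-sH₀} V e^{sH₀}` are specified through their matrix elements. -/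
theorem oscillator_bath_truncated_hs_bound_general
    {H : Type*} [NormedAddCommGroup H] [InnerProductSpace ℂ H] [CompleteSpace H]
    (N : ℕ)
    (e : HilbertBasis (Fin (N + 1) → ℕ) ℂ H)
    (ω : Fin (N + 1) → ℝ) (hω : ∀ j, 0 < ω j)
    (g : Fin N → ℂ) (Ω : ℝ) (hΩ : 0 < Ω) (s : ℝ)
    -- the energies `E(m) = ∑_j ω_j m_j` of the eigenstates of `H₀`:
    (E : (Fin (N + 1) → ℕ) → ℝ) (hE : ∀ m, E m = ∑ j, ω j * (m j : ℝ))
    -- `up j m` / `down j m`: states obtained from `m` by the action of `a† b_j` / `a b_j†`: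
    (up down : Fin N → (Fin (N + 1) → ℕ) → (Fin (N + 1) → ℕ))
    (hup : ∀ j m, up j m =
      Function.update (Function.update m 0 (m 0 + 1)) j.succ (m j.succ - 1))
    (hdown : ∀ j m, down j m =
      Function.update (Function.update m 0 (m 0 - 1)) j.succ (m j.succ + 1))
    -- the truncated interaction `V = χ_{H₀≤Ω} (∑_j g_j a† b_j + h.c.) χ_{H₀≤Ω}`:
    (V : H →L[ℂ] H)
    (hV : ∀ n m : Fin (N + 1) → ℕ, ⟪e n, V (e m)⟫ =
      if E n ≤ Ω ∧ E m ≤ Ω then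
        ∑ j : Fin N,
          ((g j) * (Real.sqrt (((m 0 : ℝ) + 1) * (m j.succ : ℝ)) : ℂ) *
              (if n = up j m then 1 else 0) +
            (starRingEnd ℂ (g j)) * (Real.sqrt ((m 0 : ℝ) * ((m j.succ : ℝ) + 1)) : ℂ) *
              (if n = down j m then 1 else 0))
      else 0)
    -- `W = e^{-sH₀} V e^{sH₀}`:
    (W : H →L[ℂ] H)
    (hW : ∀ n m : Fin (N + 1) → ℕ,
      ⟪e n, W (e m)⟫ = (Real.exp (-s * (E n - E m)) : ℂ) * ⟪e n, V (e m)⟫) :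
    hsNorm e W ≤
      2 * Real.sqrt (∑ j : Fin N, ‖g j‖ ^ 2) * Real.sqrt N *
        (Ω / (⨅ j, ω j) + 1) ^ (((N : ℝ) + 3) / 2) *
        Real.exp (|s| * (⨆ j : Fin N, |ω 0 - ω j.succ|)) := by
  obtain rfl : E = energy ω := funext hE
  obtain rfl : up = fun j => hop 0 j.succ := funext fun j => funext (hup j)
  obtain rfl : down = fun j => hop j.succ 0 := funext fun j => funext fun m => by
    rw [hdown, hop, Function.update_comm (Fin.succ_ne_zero j).symm]
  set K := Ω / ⨅ j, ω j
  set Δ := ⨆ j : Fin N, |ω 0 - ω j.succ|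
  set C := 2 * Real.exp (|s| * Δ) * (K + 1) * (√(N : ℝ) * √(∑ j, ‖g j‖ ^ 2))
  have hK : 0 ≤ K := div_nonneg hΩ.le (le_ciInf fun j => (hω j).le)
  have hΔ : ∀ j : Fin N, |ω 0 - ω j.succ| ≤ Δ := le_ciSup (Finite.bddAbove_range _)
  have hcol : ∀ m, ‖W (e m)‖ ≤ C := by
    intro m
    have hCS := sum_le_sqrt_card_mul_sqrt_sum_sq univ fun j => ‖g j‖
    rw [card_univ, Fintype.card_fin] at hCS
    refine (norm_le_of_inner_eq_truncated_interaction e hω g hΩ.le hΔ s m fun n => ?_).trans ?_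
    · rw [hW, hV]
    · exact mul_le_mul_of_nonneg_left hCS (by positivity)
  set F := Fintype.piFinset fun _ : Fin (N + 1) => range (⌊K⌋₊ + 1)
  have hvanish : ∀ m ∉ F, W (e m) = 0 := fun m hm =>
    e.eq_zero_of_forall_inner_eq_zero fun n => by
      rw [hW, hV, if_neg fun h => hm (mem_piFinset_range_of_energy_le hω h.2), mul_zero]
  have hpow : (K + 1) ^ (((N : ℝ) + 3) / 2) = √((K + 1) ^ (N + 1)) * (K + 1) := by
    rw [Real.sqrt_eq_rpow, ← Real.rpow_natCast, ← Real.rpow_mul (by positivity),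
      ← Real.rpow_add_one (by positivity)]
    push_cast
    ring_nf
  calc hsNorm e W ≤ √(#F : ℝ) * C :=
        hsNorm_le_sqrt_card_mul e W F hvanish (by positivity) hcol
    _ ≤ √((K + 1) ^ (N + 1)) * C := by
        gcongr
        simpa only [Fintype.card_fin] using card_piFinset_range_floor_le (ι := Fin (N + 1)) hK
    _ = _ := by rw [hpow]; ring

/-- For the truncated oscillator-bath interaction
`V = χ_{H₀≤Ω} (∑_{j=1}^N g_j a† b_j + h.c.) χ_{H₀≤Ω}` with
`H₀ = ω_0 a†a + ∑_j ω_j b_j† b_j`, the bound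
`‖e^{-sH₀} V e^{sH₀}‖₂ ≤ 2 ‖g‖₂ √N (Ω/ω_min + 1)^{(N+3)/2} e^{|s| Δω}`
holds for all real `s`, where `ω_min = min_{0≤j≤N} ω_j`,
`Δω = max_{1≤j≤N} |ω_0 − ω_j|` and `‖g‖₂ = (∑_j |g_j|²)^{1/2}`.
The Fock space of the `N+1` oscillators is realized as a Hilbert space `H` with
orthonormal basis `(|m⟩)` indexed by occupation numbers `m : Fin (N+1) → ℕ`
(oscillator `a` has index `0` and bath oscillator `b_j` has index `j`); the operators
`V` and `W(s) = e^{-sH₀} V e^{sH₀}` are specified through their matrix elements. -/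
theorem oscillator_bath_truncated_hs_bound
    {H : Type*} [NormedAddCommGroup H] [InnerProductSpace ℂ H] [CompleteSpace H]
    (N : ℕ) (hN : 0 < N)
    (e : HilbertBasis (Fin (N + 1) → ℕ) ℂ H)
    (ω : Fin (N + 1) → ℝ) (hω : ∀ j, 0 < ω j)
    (g : Fin N → ℂ) (Ω : ℝ) (hΩ : 0 < Ω) (s : ℝ)
    -- the energies `E(m) = ∑_j ω_j m_j` of the eigenstates of `H₀`:
    (E : (Fin (N + 1) → ℕ) → ℝ) (hE : ∀ m, E m = ∑ j, ω j * (m j : ℝ))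
    -- `up j m` / `down j m`: states obtained from `m` by the action of `a† b_j` / `a b_j†`:
    (up down : Fin N → (Fin (N + 1) → ℕ) → (Fin (N + 1) → ℕ))
    (hup : ∀ j m, up j m =
      Function.update (Function.update m 0 (m 0 + 1)) j.succ (m j.succ - 1))
    (hdown : ∀ j m, down j m =
      Function.update (Function.update m 0 (m 0 - 1)) j.succ (m j.succ + 1))
    -- the truncated interaction `V = χ_{H₀≤Ω} (∑_j g_j a† b_j + h.c.) χ_{H₀≤Ω}`:
    (V : H →L[ℂ] H)
    (hV : ∀ n m : Fin (N + 1) → ℕ, ⟪e n, V (e m)⟫ =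
      if E n ≤ Ω ∧ E m ≤ Ω then
        ∑ j : Fin N,
          ((g j) * (Real.sqrt (((m 0 : ℝ) + 1) * (m j.succ : ℝ)) : ℂ) *
              (if n = up j m then 1 else 0) +
            (starRingEnd ℂ (g j)) * (Real.sqrt ((m 0 : ℝ) * ((m j.succ : ℝ) + 1)) : ℂ) *
              (if n = down j m then 1 else 0))
      else 0)
    -- `W = e^{-sH₀} V e^{sH₀}`:
    (W : H →L[ℂ] H)
    (hW : ∀ n m : Fin (N + 1) → ℕ,
      ⟪e n, W (e m)⟫ = (Real.exp (-s * (E n - E m)) : ℂ) * ⟪e n, V (e m)⟫) :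
    hsNorm e W ≤
      2 * Real.sqrt (∑ j : Fin N, ‖g j‖ ^ 2) * Real.sqrt N *
        (Ω / (⨅ j, ω j) + 1) ^ (((N : ℝ) + 3) / 2) *
        Real.exp (|s| * (⨆ j : Fin N, |ω 0 - ω j.succ|)) :=
  oscillator_bath_truncated_hs_bound_general N e ω hω g Ω hΩ s E hE up down hup hdown V hV W hW
end
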